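/- For all integers m, n, r ≥ 0, in ℤ[q]: L_q^{(r)}(m+n) = Σ_{i=0}^{n} Σ_{j=0}^{m} q^{i(j+m+2r)} · [j+m+2r]_q^{⟨n-i⟩} · qbinom(n,i) · L_q^{(r)}(m,j) · L_q(i), where L_q(i) = Σ_{k=0}^{i} L_q(i,k). -/

import Mathlib

/-!
Write `qrLah r n k = q^{r(r-1)} G_{2r}(n, k)` with
`G_b(n, k) = Σ_i q^{ib} [b]_q^{⟨n-i⟩} qbinom(n, i) L_q(i, k)`. The second Pascal rule
`qbinom(n+1, i+1) = q^{n-i} qbinom(n, i) + qbinom(n, i+1)` together with the recurrence of `L_q`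
gives the triangular recurrence
`G_b(n+1, k) = q^{n+b+k-1} G_b(n, k-1) + [n+b+k]_q G_b(n, k)`.
Its coefficients depend on `n + b + k` only, and `(m+n) + b + k = n + (j+m+b) + (k-j)`, so by
induction on `n` we get the convolution `G_b(m+n, k) = Σ_j G_b(m, j) G_{j+m+b}(n, k-j)`; summing
over `k` gives the formula. The convolution moves the parameter from `2r` to `j+m+2r`, which is
why `G_b = qShiftLah b` is introduced for every `b`.
-/

open Finset Polynomial

/-- The q-integer [n]_q = 1 + q + ⋯ + q^{n-1} in ℤ[q]. -/
noncomputable def qint (n : ℕ) : Polynomial ℤ := ∑ i ∈ range n, X ^ i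

/-- The q-rising factorial [n]_q^{⟨m⟩} = ∏_{i=n}^{n+m-1} [i]_q. -/
noncomputable def qrise (n m : ℕ) : Polynomial ℤ := ∏ i ∈ range m, qint (n + i)

/-- The q-binomial coefficient. -/
noncomputable def qbinom : ℕ → ℕ → Polynomial ℤ
  | _, 0 => 1
  | 0, _ + 1 => 0
  | n + 1, k + 1 => qbinom n k + X ^ (k + 1) * qbinom n (k + 1)

/-- The q-Lah numbers (natural-number index version). -/
noncomputable def qLahNat : ℕ → ℕ → Polynomial ℤ
  | 0, 0 => 1
  | 0, _ + 1 => 0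
  | _ + 1, 0 => 0
  | n + 1, k + 1 => X ^ (n + k) * qLahNat n k + qint (n + k + 1) * qLahNat n (k + 1)

/-- The q-Lah numbers, vanishing for negative second index. -/
noncomputable def qLah (n : ℕ) (k : ℤ) : Polynomial ℤ :=
  if 0 ≤ k then qLahNat n k.toNat else 0

/-- Sum of the q-Lah numbers: L_q(n) = Σ_{k=0}^{n} L_q(n,k). -/
noncomputable def qLahSum (n : ℕ) : Polynomial ℤ := ∑ k ∈ range (n + 1), qLah n (k : ℤ)

/-- The q-r-Lah numbers. -/
noncomputable def qrLah (r n : ℕ) (k : ℤ) : Polynomial ℤ :=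
  ∑ i ∈ range (n + 1), X ^ (r * (2 * i + r - 1)) * qrise (2 * r) (n - i) * qbinom n i *
    qLah i k

/-- Sum of the q-r-Lah numbers: L_q^{(r)}(n) = Σ_{k=0}^{n} L_q^{(r)}(n,k). -/
noncomputable def qrLahSum (r n : ℕ) : Polynomial ℤ :=
  ∑ k ∈ range (n + 1), qrLah r n (k : ℤ)

lemma qint_add (a b : ℕ) : qint (a + b) = qint a + X ^ a * qint b := by
  simp only [qint, sum_range_add, mul_sum, pow_add]

lemma qrise_succ (b m : ℕ) : qrise b (m + 1) = qrise b m * qint (b + m) :=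
  prod_range_succ _ _

lemma qbinom_zero_right (n : ℕ) : qbinom n 0 = 1 := by
  cases n <;> rw [qbinom]

lemma qbinom_succ_succ (n k : ℕ) :
    qbinom (n + 1) (k + 1) = qbinom n k + X ^ (k + 1) * qbinom n (k + 1) := by
  rw [qbinom]

lemma qbinom_eq_zero_of_lt {n k : ℕ} (h : n < k) : qbinom n k = 0 := by
  obtain ⟨k, rfl⟩ := Nat.exists_eq_add_one_of_ne_zero (by omega : k ≠ 0)
  induction n generalizing k with
  | zero => rw [qbinom]
  | succ n ih =>
    obtain ⟨k, rfl⟩ := Nat.exists_eq_add_one_of_ne_zero (by omega : k ≠ 0)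
    rw [qbinom_succ_succ, ih k (by omega), ih (k + 1) (by omega), mul_zero, add_zero]

lemma qbinom_succ_succ' (n k : ℕ) :
    qbinom (n + 1) (k + 1) = X ^ (n - k) * qbinom n k + qbinom n (k + 1) := by
  induction n generalizing k with
  | zero => cases k <;> simp [qbinom]
  | succ n ih =>
    cases k with
    | zero =>
      have h₁ := ih 0
      have h₂ := qbinom_succ_succ n 0
      rw [qbinom_succ_succ (n + 1) 0]
      simp only [Nat.sub_zero, qbinom_zero_right] at h₁ h₂ ⊢
      linear_combination X * h₁ - h₂
    | succ k =>
      rw [qbinom_succ_succ (n + 1) (k + 1), Nat.add_sub_add_right]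
      rcases lt_or_ge k n with hk | hk
      · obtain ⟨d, rfl⟩ := Nat.exists_eq_add_of_lt hk
        have h₁ := ih k
        have h₂ := ih (k + 1)
        rw [show k + d + 1 - k = d + 1 by omega] at h₁ ⊢
        rw [Nat.add_sub_add_right, Nat.add_sub_cancel_left] at h₂
        linear_combination h₁ - X ^ (d + 1) * qbinom_succ_succ (k + d + 1) k + X ^ (k + 2) * h₂ -
          qbinom_succ_succ (k + d + 1) (k + 1)
      · rw [Nat.sub_eq_zero_of_le hk, qbinom_eq_zero_of_lt (by omega : n + 1 < k + 1 + 1)]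
        ring

lemma qLahNat_eq_zero_of_lt {n k : ℕ} (h : n < k) : qLahNat n k = 0 := by
  obtain ⟨k, rfl⟩ := Nat.exists_eq_add_one_of_ne_zero (by omega : k ≠ 0)
  induction n generalizing k with
  | zero => rw [qLahNat]
  | succ n ih =>
    obtain ⟨k, rfl⟩ := Nat.exists_eq_add_one_of_ne_zero (by omega : k ≠ 0)
    rw [qLahNat, ih k (by omega), ih (k + 1) (by omega), mul_zero, mul_zero, add_zero]

lemma qLah_of_neg (n : ℕ) {k : ℤ} (h : k < 0) : qLah n k = 0 :=
  if_neg h.not_ge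

lemma qLah_of_lt (n : ℕ) {k : ℤ} (h : (n : ℤ) < k) : qLah n k = 0 := by
  rw [qLah, if_pos (by omega), qLahNat_eq_zero_of_lt (by omega)]

lemma qLah_zero_left (k : ℤ) : qLah 0 k = if k = 0 then 1 else 0 := by
  rcases lt_trichotomy k 0 with hk | rfl | hk
  · rw [qLah_of_neg 0 hk, if_neg hk.ne]
  · rfl
  · rw [qLah_of_lt 0 hk, if_neg hk.ne']

lemma qLah_succ (n : ℕ) (k : ℤ) :
    qLah (n + 1) k = X ^ (n + (k - 1).toNat) * qLah n (k - 1) + qint (n + k.toNat) * qLah n k := by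
  rcases lt_trichotomy k 0 with hk | rfl | hk
  · rw [qLah_of_neg _ hk, qLah_of_neg _ hk, qLah_of_neg _ (by omega : k - 1 < 0)]
    ring
  · rw [qLah_of_neg _ (by omega : (0 : ℤ) - 1 < 0)]
    cases n <;> simp [qLah, qLahNat, qint]
  · obtain ⟨k, rfl⟩ : ∃ j : ℕ, k = j + 1 := ⟨k.toNat - 1, by omega⟩
    simp only [qLah, add_sub_cancel_right, if_pos (by omega : (0 : ℤ) ≤ k),
      if_pos (by omega : (0 : ℤ) ≤ k + 1), Int.toNat_natCast]
    rw [show ((k : ℤ) + 1).toNat = k + 1 by omega, qLahNat, add_assoc]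

lemma sum_qbinom_succ_mul (n : ℕ) (F : ℕ → ℤ[X]) :
    ∑ i ∈ range (n + 2), qbinom (n + 1) i * F i =
      ∑ i ∈ range (n + 1), qbinom n i * (X ^ (n - i) * F (i + 1) + F i) := by
  have hshift : ∑ i ∈ range (n + 1), qbinom n (i + 1) * F (i + 1) + qbinom n 0 * F 0 =
      ∑ i ∈ range (n + 1), qbinom n i * F i := by
    rw [← sum_range_succ' (fun i ↦ qbinom n i * F i), sum_range_succ,
      qbinom_eq_zero_of_lt (Nat.lt_succ_self n), zero_mul, add_zero]
  have hzero : qbinom (n + 1) 0 = qbinom n 0 := by rw [qbinom_zero_right, qbinom_zero_right]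
  rw [sum_range_succ', hzero]
  simp only [qbinom_succ_succ', add_mul, sum_add_distrib, add_assoc, hshift, mul_add]
  simp only [mul_assoc, mul_left_comm (qbinom n _)]

lemma sum_range_sub_eq_of_support {M : Type*} [AddCommMonoid M] {f : ℤ → M} {n : ℕ}
    (hneg : ∀ k < 0, f k = 0) (hgt : ∀ k : ℤ, n < k → f k = 0) {j N : ℕ} (hN : j + n < N) :
    ∑ k ∈ range N, f (k - j) = ∑ t ∈ range (n + 1), f t := by
  obtain ⟨d, rfl⟩ : ∃ d, N = j + (n + 1) + d := ⟨N - (j + n + 1), by omega⟩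
  have hlow : ∑ k ∈ range j, f (k - j) = 0 :=
    sum_eq_zero fun k hk ↦ hneg _ (by have := mem_range.1 hk; omega)
  have hhigh : ∑ k ∈ range d, f ((j + (n + 1) + k : ℕ) - j) = 0 :=
    sum_eq_zero fun k _ ↦ hgt _ (by push_cast; omega)
  rw [sum_range_add, sum_range_add, hlow, hhigh, zero_add, add_zero]
  exact sum_congr rfl fun t _ ↦ by push_cast; rw [add_sub_cancel_left]

lemma sum_qLah_range {i N : ℕ} (h : i < N) : ∑ k ∈ range N, qLah i k = qLahSum i := by
  simpa [qLahSum] using sum_range_sub_eq_of_support (fun _ ↦ qLah_of_neg i) (fun _ ↦ qLah_of_lt i)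
    (j := 0) (by omega : 0 + i < N)

noncomputable def qShiftLah (b n : ℕ) (k : ℤ) : ℤ[X] :=
  ∑ i ∈ range (n + 1), X ^ (i * b) * qrise b (n - i) * qbinom n i * qLah i k

lemma qrLah_eq_X_pow_mul_qShiftLah (r n : ℕ) (k : ℤ) :
    qrLah r n k = X ^ (r * (r - 1)) * qShiftLah (2 * r) n k := by
  rw [qrLah, qShiftLah, mul_sum]
  refine sum_congr rfl fun i _ ↦ ?_
  have hexp : r * (2 * i + r - 1) = r * (r - 1) + i * (2 * r) := by
    rcases r with _ | r
    · simp
    · rw [Nat.add_succ_sub_one, Nat.add_sub_cancel]; ring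
  rw [hexp, pow_add]
  ring

section

variable (b : ℕ)

lemma qShiftLah_of_neg (n : ℕ) {k : ℤ} (h : k < 0) : qShiftLah b n k = 0 :=
  sum_eq_zero fun i _ ↦ by rw [qLah_of_neg i h, mul_zero]

lemma qShiftLah_of_lt (n : ℕ) {k : ℤ} (h : (n : ℤ) < k) : qShiftLah b n k = 0 :=
  sum_eq_zero fun i hi ↦ by rw [qLah_of_lt i (by have := mem_range.1 hi; omega), mul_zero]

lemma qShiftLah_zero_left (k : ℤ) : qShiftLah b 0 k = if k = 0 then 1 else 0 := by
  simp [qShiftLah, qrise, qbinom_zero_right, qLah_zero_left]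

lemma mul_qShiftLah_congr (f : ℕ → ℤ[X]) {n a a' : ℕ} {k : ℤ} (h : 0 ≤ k → a = a') :
    f a * qShiftLah b n k = f a' * qShiftLah b n k := by
  by_cases hk : 0 ≤ k
  · rw [h hk]
  · rw [qShiftLah_of_neg b n (not_le.1 hk), mul_zero, mul_zero]

lemma qShiftLah_succ_summand (i d : ℕ) (k : ℤ) :
    X ^ d * (X ^ ((i + 1) * b) * qrise b d * qLah (i + 1) k) +
        X ^ (i * b) * qrise b (d + 1) * qLah i k =
      X ^ (i + d + b + (k - 1).toNat) * (X ^ (i * b) * qrise b d * qLah i (k - 1)) +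
        qint (i + d + b + k.toNat) * (X ^ (i * b) * qrise b d * qLah i k) := by
  rw [qrise_succ, qLah_succ, show i + d + b + k.toNat = (b + d) + (i + k.toNat) by ring,
    qint_add (b + d)]
  ring

lemma qShiftLah_succ (s : ℕ) (k : ℤ) :
    qShiftLah b (s + 1) k = X ^ (s + b + (k - 1).toNat) * qShiftLah b s (k - 1) +
      qint (s + b + k.toNat) * qShiftLah b s k := by
  calc qShiftLah b (s + 1) k
      = ∑ i ∈ range (s + 2), qbinom (s + 1) i * (X ^ (i * b) * qrise b (s + 1 - i) * qLah i k) :=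
        sum_congr rfl fun _ _ ↦ by ring
    _ = _ := by
      rw [sum_qbinom_succ_mul, qShiftLah, qShiftLah, mul_sum, mul_sum, ← sum_add_distrib]
      refine sum_congr rfl fun i hi ↦ ?_
      have h := qShiftLah_succ_summand b i (s - i) k
      rw [Nat.add_sub_cancel' (by have := mem_range.1 hi; omega)] at h
      rw [Nat.add_sub_add_right, show s + 1 - i = s - i + 1 by have := mem_range.1 hi; omega, h]
      ring

lemma qShiftLah_add (m n : ℕ) (k : ℤ) :
    qShiftLah b (m + n) k =
      ∑ j ∈ range (m + 1), qShiftLah b m j * qShiftLah (j + m + b) n (k - j) := by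
  induction n generalizing k with
  | zero =>
    simp_rw [add_zero, qShiftLah_zero_left, sub_eq_zero, mul_ite, mul_one, mul_zero]
    rcases lt_or_ge k 0 with hk | hk
    · rw [qShiftLah_of_neg b m hk]
      exact (sum_eq_zero fun j _ ↦ if_neg (by omega)).symm
    · lift k to ℕ using hk
      simp_rw [Nat.cast_inj]
      rw [sum_ite_eq]
      split_ifs with h
      · rfl
      · exact qShiftLah_of_lt b m (by have := mem_range.not.1 h; omega)
  | succ n ih =>
    rw [← add_assoc, qShiftLah_succ, ih, ih, mul_sum, mul_sum, ← sum_add_distrib]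
    refine sum_congr rfl fun j _ ↦ ?_
    rw [qShiftLah_succ, mul_add, sub_right_comm k 1, mul_left_comm, mul_left_comm (qint _)]
    congr 2
    · exact mul_qShiftLah_congr _ (X ^ ·) (by omega)
    · exact mul_qShiftLah_congr _ qint (by omega)

lemma sum_qShiftLah (n : ℕ) :
    ∑ k ∈ range (n + 1), qShiftLah b n k =
      ∑ i ∈ range (n + 1), X ^ (i * b) * qrise b (n - i) * qbinom n i * qLahSum i := by
  unfold qShiftLah
  rw [sum_comm]
  exact sum_congr rfl fun i hi ↦ by rw [← mul_sum, sum_qLah_range (mem_range.1 hi)]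

lemma sum_qShiftLah_add (m n : ℕ) :
    ∑ k ∈ range (m + n + 1), qShiftLah b (m + n) k =
      ∑ j ∈ range (m + 1), qShiftLah b m j * ∑ i ∈ range (n + 1),
        X ^ (i * (j + m + b)) * qrise (j + m + b) (n - i) * qbinom n i * qLahSum i := by
  simp_rw [qShiftLah_add, ← sum_qShiftLah]
  rw [sum_comm]
  refine sum_congr rfl fun j hj ↦ ?_
  rw [← mul_sum, sum_range_sub_eq_of_support (fun _ ↦ qShiftLah_of_neg _ n)
    (fun _ ↦ qShiftLah_of_lt _ n) (by have := mem_range.1 hj; omega)]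

end

theorem qrLahSum_add (m n r : ℕ) :
    qrLahSum r (m + n) =
      ∑ i ∈ range (n + 1), ∑ j ∈ range (m + 1),
        X ^ (i * (j + m + 2 * r)) * qrise (j + m + 2 * r) (n - i) * qbinom n i *
          qrLah r m (j : ℤ) * qLahSum i := by
  simp_rw [qrLahSum, qrLah_eq_X_pow_mul_qShiftLah, ← mul_sum, sum_qShiftLah_add, mul_sum]
  rw [sum_comm]
  exact sum_congr rfl fun i _ ↦ sum_congr rfl fun j _ ↦ by ring
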